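/- Let h : [0,∞) → ℝ be left-continuous with lower Lipschitz bound (h(t)-h(s))/(t-s) ≥ -(β+2ε) for t ≥ s (with β, ε > 0), satisfying h(t) ≥ -2εt for all t and h(t_j) ≤ -εt_j along a sequence t_j → ∞ with t_{j+1} ≥ 10 t_j. Then the decrement set of h⁻ (the complement of the set where the running infimum h⁻ is locally constant) satisfies: for each j, the Lebesgue measure of the decrement moments in [t_j, t_{j+1}] is at least ε t_{j+1} / (4(β + 2ε)). -/

import Mathlib

/-!
The running infimum `h⁻` is antitone and inherits the lower Lipschitz bound of `h`, so it is
`(β + 2ε)`-Lipschitz on `[0, ∞)`. Since `h⁻(t_j) ≥ -2ε t_j` and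
`h⁻(t_{j+1}) ≤ h(t_{j+1}) ≤ -ε t_{j+1}`, it drops by at least `ε t_{j+1} / 4` on `[t_j, t_{j+1}]`,
and by continuity its image of that interval covers the whole drop. The constancy moments
contribute only countably many values (each of them is already attained on a fixed countable dense
set), while the image of the decrement set has measure at most `β + 2ε` times its own measure.
-/

open Set MeasureTheory Filter Topology TopologicalSpace

open scoped NNReal ENNReal

theorem eventually_nhdsWithin_iff_exists_Ioo {α : Type*} [LinearOrder α] [TopologicalSpace α]
    [OrderTopology α] [NoMaxOrder α] [NoMinOrder α] {S : Set α} {p : α → Prop} {x : α} :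
    (∀ᶠ y in 𝓝[S] x, p y) ↔ ∃ a b, a < x ∧ x < b ∧ ∀ y ∈ Ioo a b ∩ S, p y := by
  rw [eventually_nhdsWithin_iff, Filter.Eventually, mem_nhds_iff_exists_Ioo_subset]
  refine exists₂_congr fun a b => ?_
  simp only [mem_Ioo, and_assoc, subset_def, mem_ofPred_eq, mem_inter_iff, and_imp]

theorem countable_image_setOf_eventually_eq {X Y : Type*} [TopologicalSpace X]
    [PseudoMetrizableSpace X] [SeparableSpace X] (f : X → Y) (S : Set X) :
    (f '' {x ∈ S | ∀ᶠ y in 𝓝[S] x, f y = f x}).Countable := by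
  obtain ⟨T, hTS, hT, hST⟩ := (IsSeparable.of_separableSpace S).exists_countable_dense_subset
  refine (hT.image f).mono ?_
  rintro _ ⟨x, ⟨hxS, hx⟩, rfl⟩
  have := mem_closure_iff_nhdsWithin_neBot.mp (hST hxS)
  obtain ⟨y, hyx, hyT⟩ :=
    ((hx.filter_mono (nhdsWithin_mono x hTS)).and self_mem_nhdsWithin).exists
  exact ⟨y, hyT, hyx⟩

theorem LipschitzOnWith.volume_image_le {f : ℝ → ℝ} {K : ℝ≥0} {s : Set ℝ}
    (hf : LipschitzOnWith K f s) : volume (f '' s) ≤ K * volume s := by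
  simpa [hausdorffMeasure_real] using hf.hausdorffMeasure_image_le zero_le_one

theorem LipschitzOnWith.ofReal_abs_sub_le_mul_volume_setOf_not_eventually_eq {f : ℝ → ℝ}
    {K : ℝ≥0} {S : Set ℝ} (hf : LipschitzOnWith K f S) {a b : ℝ} (hab : uIcc a b ⊆ S) :
    ENNReal.ofReal |f b - f a| ≤
      K * volume {s ∈ uIcc a b | ¬ ∀ᶠ u in 𝓝[S] s, f u = f s} := by
  set D := {s ∈ uIcc a b | ¬ ∀ᶠ u in 𝓝[S] s, f u = f s}
  set C := {s ∈ S | ∀ᶠ u in 𝓝[S] s, f u = f s}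
  have hC : volume (f '' C) = 0 := (countable_image_setOf_eventually_eq f S).measure_zero volume
  have hcover : f '' uIcc a b ⊆ f '' D ∪ f '' C := by
    rintro _ ⟨s, hs, rfl⟩
    by_cases hconst : ∀ᶠ u in 𝓝[S] s, f u = f s
    · exact Or.inr ⟨s, ⟨hab hs, hconst⟩, rfl⟩
    · exact Or.inl ⟨s, ⟨hs, hconst⟩, rfl⟩
  calc ENNReal.ofReal |f b - f a| = volume (uIcc (f a) (f b)) := Real.volume_interval.symm
    _ ≤ volume (f '' uIcc a b) :=
        measure_mono (intermediate_value_uIcc (hf.mono hab).continuousOn)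
    _ ≤ volume (f '' D) + volume (f '' C) := (measure_mono hcover).trans (measure_union_le _ _)
    _ = volume (f '' D) := by rw [hC, add_zero]
    _ ≤ K * volume D := (hf.mono fun s hs => hab hs.1).volume_image_le

theorem ENNReal.ofReal_div_le_of_ofReal_le_mul {x y : ℝ} {μ : ℝ≥0∞} (hx : 0 < x)
    (hxy : ENNReal.ofReal x ≤ ENNReal.ofReal y * μ) : ENNReal.ofReal (x / y) ≤ μ := by
  have hy : 0 < y := by
    by_contra! hy
    rw [ENNReal.ofReal_of_nonpos hy, zero_mul] at hxy
    exact (ENNReal.ofReal_pos.mpr hx).not_ge hxy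
  rw [ENNReal.ofReal_div_of_pos hy]
  exact ENNReal.div_le_of_le_mul' hxy

noncomputable def runningInf (h : ℝ → ℝ) (s : ℝ) : ℝ := sInf (h '' Icc 0 s)

section RunningInf

variable {h : ℝ → ℝ} {L : ℝ}

theorem bddBelow_image_Icc_of_lowerLipschitz
    (hLip : ∀ s t : ℝ, 0 ≤ s → s ≤ t → h t - h s ≥ -L * (t - s)) (s : ℝ) :
    BddBelow (h '' Icc 0 s) := by
  refine ⟨h 0 - |L| * s, ?_⟩
  rintro _ ⟨u, ⟨hu0, hus⟩, rfl⟩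
  have := hLip 0 u le_rfl hu0
  nlinarith [neg_abs_le L, le_abs_self L]

theorem runningInf_le {s : ℝ} (hbdd : BddBelow (h '' Icc 0 s)) {u : ℝ} (hu : u ∈ Icc 0 s) :
    runningInf h s ≤ h u :=
  csInf_le hbdd (mem_image_of_mem h hu)

theorem le_runningInf {s c : ℝ} (hs : 0 ≤ s) (hc : ∀ u ∈ Icc 0 s, c ≤ h u) :
    c ≤ runningInf h s :=
  le_csInf ⟨h 0, 0, left_mem_Icc.mpr hs, rfl⟩ (forall_mem_image.mpr hc)

theorem runningInf_antitoneOn (hbdd : ∀ s, BddBelow (h '' Icc 0 s)) :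
    AntitoneOn (runningInf h) (Ici 0) := fun _ hs _ _ hst =>
  csInf_le_csInf (hbdd _) ⟨h 0, 0, left_mem_Icc.mpr hs, rfl⟩
    (image_mono (Icc_subset_Icc le_rfl hst))

theorem runningInf_sub_mul_le
    (hL : 0 ≤ L) (hLip : ∀ s t : ℝ, 0 ≤ s → s ≤ t → h t - h s ≥ -L * (t - s)) {s t : ℝ}
    (hs : 0 ≤ s) (hst : s ≤ t) : runningInf h s - L * (t - s) ≤ runningInf h t := by
  refine le_runningInf (hs.trans hst) fun u ⟨hu0, hut⟩ => ?_
  have hbdd := bddBelow_image_Icc_of_lowerLipschitz hLip s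
  rcases le_total u s with hus | hsu
  · have := runningInf_le hbdd ⟨hu0, hus⟩
    nlinarith
  · have := runningInf_le hbdd ⟨hs, le_rfl⟩
    have := hLip s u hs hsu
    nlinarith

theorem lipschitzOnWith_runningInf (hL : 0 ≤ L)
    (hLip : ∀ s t : ℝ, 0 ≤ s → s ≤ t → h t - h s ≥ -L * (t - s)) :
    LipschitzOnWith L.toNNReal (runningInf h) (Ici 0) := by
  refine LipschitzOnWith.of_le_add_mul' L fun s hs t ht => ?_
  rcases le_total s t with hst | hts
  · have := runningInf_sub_mul_le hL hLip hs hst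
    rw [dist_comm, Real.dist_eq, abs_of_nonneg (sub_nonneg.mpr hst)]
    linarith
  · have := runningInf_antitoneOn (bddBelow_image_Icc_of_lowerLipschitz hLip) ht hs hts
    nlinarith [dist_nonneg (x := s) (y := t)]

end RunningInf

theorem decrement_set_large_general
    (β ε : ℝ) (hβ : 0 < β) (hε : 0 < ε) (h : ℝ → ℝ)
    (hLip : ∀ s t : ℝ, 0 ≤ s → s ≤ t → h t - h s ≥ -(β + 2 * ε) * (t - s))
    (hbelow : ∀ t : ℝ, 0 ≤ t → h t ≥ -2 * ε * t)
    (t : ℕ → ℝ) (ht0 : 0 < t 0) (htgrow : ∀ j, 10 * t j ≤ t (j + 1))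
    (habove : ∀ j, h (t j) ≤ -ε * t j)
    (hm : ℝ → ℝ)
    (hhm : ∀ s : ℝ, 0 ≤ s → hm s = sInf (h '' Set.Icc 0 s)) :
    ∀ j : ℕ,
      ENNReal.ofReal (ε * t (j + 1) / (4 * (β + 2 * ε))) ≤
        volume {s : ℝ | s ∈ Set.Icc (t j) (t (j + 1)) ∧
          ¬ ∃ a b : ℝ, a < s ∧ s < b ∧
            ∀ u ∈ Set.Ioo a b ∩ Set.Ici (0:ℝ), hm u = hm s} := by
  intro j
  have ht_pos : ∀ k, 0 < t k := fun k => Nat.rec ht0 (fun k ih => by linarith [htgrow k]) k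
  have hab : t j ≤ t (j + 1) := by linarith [htgrow j, ht_pos j]
  simp only [← eventually_nhdsWithin_iff_exists_Ioo, ← uIcc_of_le hab]
  have hm_eq : EqOn hm (runningInf h) (Ici 0) := hhm
  have hm_lip : LipschitzOnWith (β + 2 * ε).toNNReal hm (Ici 0) := fun x hx y hy => by
    rw [hm_eq hx, hm_eq hy]
    exact lipschitzOnWith_runningInf (by positivity) hLip hx hy
  have hm_tj : -2 * ε * t j ≤ hm (t j) := by
    rw [hm_eq (ht_pos j).le]
    exact le_runningInf (ht_pos j).le fun u hu => by nlinarith [hbelow u hu.1, hu.2]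
  have hm_tj_succ : hm (t (j + 1)) ≤ -ε * t (j + 1) := by
    rw [hm_eq (ht_pos (j + 1)).le]
    exact (runningInf_le (bddBelow_image_Icc_of_lowerLipschitz hLip _)
      ⟨(ht_pos (j + 1)).le, le_rfl⟩).trans (habove (j + 1))
  have hdrop : ε * t (j + 1) / 4 ≤ |hm (t (j + 1)) - hm (t j)| := by
    rw [abs_sub_comm]
    nlinarith [htgrow j, ht_pos j, le_abs_self (hm (t j) - hm (t (j + 1)))]
  rw [div_mul_eq_div_div]
  exact ENNReal.ofReal_div_le_of_ofReal_le_mul (by nlinarith [ht_pos (j + 1)])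
    ((ENNReal.ofReal_le_ofReal hdrop).trans
      (hm_lip.ofReal_abs_sub_le_mul_volume_setOf_not_eventually_eq
        fun s hs => (ht_pos j).le.trans (uIcc_of_le hab ▸ hs).1))

/-- Estimate (2.21): the decrement set is large.  If `h` is left-continuous on `[0,∞)` with
lower Lipschitz bound `-(β+2ε)`, `h(t) ≥ -2εt` everywhere, and `h(t_j) ≤ -ε t_j` along a
sequence with `t_{j+1} ≥ 10 t_j`, then for each `j` the set of decrement moments of the
running infimum `h⁻` inside `[t_j, t_{j+1}]` has Lebesgue measure at least
`ε t_{j+1} / (4(β+2ε))`. -/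
theorem decrement_set_large
    (β ε : ℝ) (hβ : 0 < β) (hε : 0 < ε) (h : ℝ → ℝ)
    (hLip : ∀ s t : ℝ, 0 ≤ s → s ≤ t → h t - h s ≥ -(β + 2 * ε) * (t - s))
    (hleft : ∀ t : ℝ, 0 < t → ContinuousWithinAt h (Set.Iic t) t)
    (hbelow : ∀ t : ℝ, 0 ≤ t → h t ≥ -2 * ε * t)
    (t : ℕ → ℝ) (ht0 : 0 < t 0) (htgrow : ∀ j, 10 * t j ≤ t (j + 1))
    (habove : ∀ j, h (t j) ≤ -ε * t j)
    (hm : ℝ → ℝ)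
    (hhm : ∀ s : ℝ, 0 ≤ s → hm s = sInf (h '' Set.Icc 0 s)) :
    ∀ j : ℕ,
      ENNReal.ofReal (ε * t (j + 1) / (4 * (β + 2 * ε))) ≤
        volume {s : ℝ | s ∈ Set.Icc (t j) (t (j + 1)) ∧
          ¬ ∃ a b : ℝ, a < s ∧ s < b ∧
            ∀ u ∈ Set.Ioo a b ∩ Set.Ici (0:ℝ), hm u = hm s} :=
  decrement_set_large_general β ε hβ hε h hLip hbelow t ht0 htgrow habove hm hhm
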